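/- arXiv:2210.14387 — 7 statements merged into one kernel-verified Lean document; each statement's English description precedes it below -/
import Mathlib

section
/- If a vertex v of a graph G belongs to two distinct simplexes of G, then G is not α-excellent. -/
/-- `I` is an independent set in `G`: pairwise nonadjacent vertices. -/
def IsIndep {V : Type} (G : SimpleGraph V) (I : Set V) : Prop :=
  I.Pairwise fun u v => ¬ G.Adj u v

/-- The independence number `α(G)`: maximum size of an independent set. -/
noncomputable def indepNum {V : Type} (G : SimpleGraph V) : ℕ :=
  sSup {n | ∃ I : Finset V, IsIndep G ↑I ∧ I.card = n}

/-- `G` is α-excellent: every vertex lies in some maximum independent set. -/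
def AlphaExcellent {V : Type} (G : SimpleGraph V) : Prop :=
  ∀ v : V, ∃ I : Finset V, IsIndep G ↑I ∧ v ∈ I ∧ I.card = indepNum G

/-- A vertex is simplicial if its neighborhood induces a complete subgraph. -/
def IsSimplicial {V : Type} (G : SimpleGraph V) (u : V) : Prop :=
  G.IsClique (G.neighborSet u)

/-- The closed neighborhood of a vertex. -/
def ClosedNbhd {V : Type} (G : SimpleGraph V) (u : V) : Set V :=
  insert u (G.neighborSet u)

lemma closedNbhd_clique {V : Type} (G : SimpleGraph V) (u : V) (hu : IsSimplicial G u) :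
    G.IsClique (ClosedNbhd G u) := by
  intro a ha b hb hab
  rcases ha with rfl | ha
  · rcases hb with rfl | hb
    · exact absurd rfl hab
    · exact hb
  · rcases hb with rfl | hb
    · exact (G.adj_symm ha)
    · exact hu ha hb hab

theorem stmt3 {V : Type} [Fintype V] (G : SimpleGraph V) (v u w : V)
    (hu : IsSimplicial G u) (hw : IsSimplicial G w)
    (hne : ClosedNbhd G u ≠ ClosedNbhd G w)
    (hvu : v ∈ ClosedNbhd G u) (hvw : v ∈ ClosedNbhd G w) :
    ¬ AlphaExcellent G := by
  classical
  intro hex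
  have huw : u ≠ w := fun h => hne (by rw [h])
  -- u and w are not adjacent
  have hadj : ¬ G.Adj u w := by
    intro h
    apply hne
    ext x
    constructor
    · rintro (rfl | hx)
      · exact Or.inr (G.adj_symm h)
      · by_cases hxw : x = w
        · exact Or.inl hxw
        · exact Or.inr ((hu hx h hxw).symm)
    · rintro (rfl | hx)
      · exact Or.inr h
      · by_cases hxu : x = u
        · exact Or.inl hxu
        · exact Or.inr ((hw hx h.symm hxu).symm)
  obtain ⟨I, hI, hvI, hcard⟩ := hex v
  -- any vertex of I in a closed nbhd equals v
  have key : ∀ z : V, (z ∈ ClosedNbhd G u ∨ z ∈ ClosedNbhd G w) → z ∈ I → z = v := by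
    intro z hz hzI
    by_contra hzv
    rcases hz with hz | hz
    · exact hI hzI hvI hzv (closedNbhd_clique G u hu hz hvu hzv)
    · exact hI hzI hvI hzv (closedNbhd_clique G w hw hz hvw hzv)
  have humem : u ∈ ClosedNbhd G u := Or.inl rfl
  have hwmem : w ∈ ClosedNbhd G w := Or.inl rfl
  set J : Finset V := insert u (insert w (I.erase v)) with hJ
  have huNot : u ∉ insert w (I.erase v) := by
    simp only [Finset.mem_insert, Finset.mem_erase]
    rintro (rfl | ⟨hneq, hmem⟩)
    · exact huw rfl
    · exact hneq (key u (Or.inl humem) hmem)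
  have hwNot : w ∉ I.erase v := by
    simp only [Finset.mem_erase]
    rintro ⟨hneq, hmem⟩
    exact hneq (key w (Or.inr hwmem) hmem)
  have hJcard : J.card = I.card + 1 := by
    rw [hJ, Finset.card_insert_of_notMem huNot, Finset.card_insert_of_notMem hwNot,
      Finset.card_erase_of_mem hvI]
    have : 1 ≤ I.card := Finset.card_pos.mpr ⟨v, hvI⟩
    omega
  -- J is independent
  have hJindep : IsIndep G ↑J := by
    intro a ha b hb hab
    simp only [hJ, Finset.coe_insert, Set.mem_insert_iff, Finset.coe_erase,
      Set.mem_diff, Set.mem_singleton_iff, Finset.mem_coe, Finset.mem_erase] at ha hb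
    have adjU : ∀ z : V, z ∈ I → z ≠ v → ¬ G.Adj u z := by
      intro z hzI hzv h
      exact hzv (key z (Or.inl (Or.inr h)) hzI)
    have adjW : ∀ z : V, z ∈ I → z ≠ v → ¬ G.Adj w z := by
      intro z hzI hzv h
      exact hzv (key z (Or.inr (Or.inr h)) hzI)
    rcases ha with rfl | rfl | ⟨haI, hav⟩
    · rcases hb with rfl | rfl | ⟨hbI, hbv⟩
      · exact absurd rfl hab
      · exact hadj
      · exact adjU b hbI hbv
    · rcases hb with rfl | rfl | ⟨hbI, hbv⟩
      · exact fun h => hadj (G.adj_symm h)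
      · exact absurd rfl hab
      · exact adjW b hbI hbv
    · rcases hb with rfl | rfl | ⟨hbI, hbv⟩
      · exact fun h => adjU a haI hav (G.adj_symm h)
      · exact fun h => adjW a haI hav (G.adj_symm h)
      · exact hI haI hbI hab
  -- indepNum bound
  have hbdd : BddAbove {n | ∃ I : Finset V, IsIndep G ↑I ∧ I.card = n} := by
    refine ⟨Fintype.card V, ?_⟩
    rintro n ⟨K, _, rfl⟩
    exact Finset.card_le_univ K
  have hle : J.card ≤ indepNum G := le_csSup hbdd ⟨J, hJindep, rfl⟩
  rw [hJcard, hcard] at hle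
  omega
end

section
/- If a k-tree G of order n has a perfect (k+1)-cover, then G is α-excellent and α(G) = n/(k+1); moreover each of the k+1 partite sets of G is a maximum independent set. -/
/-- Add a new vertex (the last vertex of `Fin (n+1)`) joined to the vertices of `s`. -/
def addVertex {n : ℕ} (G : SimpleGraph (Fin n)) (s : Finset (Fin n)) :
    SimpleGraph (Fin (n + 1)) :=
  SimpleGraph.fromRel fun u v =>
    (∃ u' v' : Fin n, u = u'.castSucc ∧ v = v'.castSucc ∧ G.Adj u' v') ∨
      (u = Fin.last n ∧ ∃ v' ∈ s, v = v'.castSucc)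

/-- The `k`-trees on `Fin n`, built from `K_k` by repeatedly adding a vertex
joined to `k` mutually adjacent vertices. -/
inductive IsKTreeOn (k : ℕ) : ∀ n : ℕ, SimpleGraph (Fin n) → Prop
  | base : IsKTreeOn k k ⊤
  | extend {n : ℕ} {G : SimpleGraph (Fin n)} (s : Finset (Fin n)) :
      IsKTreeOn k n G → s.card = k → G.IsClique ↑s → IsKTreeOn k (n + 1) (addVertex G s)

/-- `G` is a `k`-tree if it is isomorphic to some graph built by the `k`-tree construction. -/
def IsKTree {V : Type} (k : ℕ) (G : SimpleGraph V) : Prop :=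
  ∃ (n : ℕ) (H : SimpleGraph (Fin n)), IsKTreeOn k n H ∧ Nonempty (G ≃g H)

/-- `P` is a perfect `m`-cover of `G`: each member is a clique of order `m`,
and every vertex belongs to exactly one member. -/
def IsPerfectCover {V : Type} (G : SimpleGraph V) (m : ℕ) (P : Finset (Finset V)) : Prop :=
  (∀ s ∈ P, s.card = m ∧ G.IsClique ↑s) ∧ ∀ v : V, ∃! s : Finset V, s ∈ P ∧ v ∈ s

lemma exists_coloring {k n : ℕ} {H : SimpleGraph (Fin n)} (h : IsKTreeOn k n H) :
    ∃ f : Fin n → Fin (k + 1), ∀ u v, H.Adj u v → f u ≠ f v := by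
  induction h with
  | base =>
    refine ⟨Fin.castSucc, fun u v huv hfe => ?_⟩
    exact huv.ne (Fin.castSucc_injective _ hfe)
  | @extend n G s hG hcard hclique ih =>
    obtain ⟨f, hf⟩ := ih
    have hex : ∃ c : Fin (k + 1), c ∉ s.image f := by
      by_contra hc
      push_neg at hc
      have h1 : (Finset.univ : Finset (Fin (k + 1))).card ≤ (s.image f).card :=
        Finset.card_le_card fun c _ => hc c
      have h2 := Finset.card_image_le (s := s) (f := f)
      simp [hcard, Fintype.card_fin] at h1
      omega
    obtain ⟨c, hc⟩ := hex
    refine ⟨Fin.lastCases c f, fun u v huv => ?_⟩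
    rw [addVertex, SimpleGraph.fromRel_adj] at huv
    obtain ⟨hne, h | h⟩ := huv
    · obtain ⟨u', v', rfl, rfl, hadj⟩ | ⟨rfl, v', hv's, rfl⟩ := h
      · simpa using hf u' v' hadj
      · simp only [Fin.lastCases_last, Fin.lastCases_castSucc]
        intro h'; exact hc (h' ▸ Finset.mem_image_of_mem f hv's)
    · obtain ⟨u', v', rfl, rfl, hadj⟩ | ⟨rfl, v', hv's, rfl⟩ := h
      · simpa using (hf u' v' hadj).symm
      · simp only [Fin.lastCases_last, Fin.lastCases_castSucc]
        intro h'; exact hc (h' ▸ Finset.mem_image_of_mem f hv's)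

theorem stmt7 {V : Type} [Fintype V] (G : SimpleGraph V) (k : ℕ)
    (hG : IsKTree k G) (P : Finset (Finset V)) (hP : IsPerfectCover G (k + 1) P) :
    AlphaExcellent G ∧ indepNum G = Fintype.card V / (k + 1) ∧
      ∀ f : V → Fin (k + 1), (∀ u v : V, G.Adj u v → f u ≠ f v) →
        ∀ i : Fin (k + 1),
          IsIndep G ↑(Finset.univ.filter fun x => f x = i) ∧
            (Finset.univ.filter fun x => f x = i).card = indepNum G := by
  classical
  -- the cover map: each vertex belongs to a unique clique of P
  have hcov0 : ∀ v : V, ∃ s, (s ∈ P ∧ v ∈ s) ∧ ∀ t, (t ∈ P ∧ v ∈ t) → t = s := fun v => hP.2 v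
  choose cov hcov huniq using hcov0
  -- cliques of P give adjacency
  have hadj : ∀ s ∈ P, ∀ u ∈ s, ∀ v ∈ s, u ≠ v → G.Adj u v := by
    intro s hs u hu v hv hne
    exact (hP.1 s hs).2 (Finset.mem_coe.mpr hu) (Finset.mem_coe.mpr hv) hne
  -- every independent finset has card ≤ P.card
  have hbound : ∀ I : Finset V, IsIndep G ↑I → I.card ≤ P.card := by
    intro I hI
    apply Finset.card_le_card_of_injOn cov (fun v _ => (hcov v).1)
    intro u hu v hv he
    by_contra hne
    have h1 : u ∈ cov v := he ▸ (hcov u).2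
    exact hI (Finset.mem_coe.mpr hu) (Finset.mem_coe.mpr hv) hne
      (hadj (cov v) (hcov v).1 u h1 v (hcov v).2 hne)
  -- for a proper coloring, on each clique of P every color appears exactly once
  have hinj : ∀ (f : V → Fin (k + 1)), (∀ u v : V, G.Adj u v → f u ≠ f v) →
      ∀ s ∈ P, Set.InjOn f ↑s := by
    intro f hf s hs u hu v hv he
    by_contra hne
    exact hf u v (hadj s hs u hu v hv hne) he
  have hsurj : ∀ (f : V → Fin (k + 1)), (∀ u v : V, G.Adj u v → f u ≠ f v) →
      ∀ s ∈ P, ∀ i : Fin (k + 1), ∃ v ∈ s, f v = i := by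
    intro f hf s hs i
    have h1 : (s.image f).card = k + 1 := by
      rw [Finset.card_image_of_injOn (hinj f hf s hs), (hP.1 s hs).1]
    have h2 : s.image f = Finset.univ :=
      Finset.eq_univ_of_card _ (by simp [h1])
    have : i ∈ s.image f := h2 ▸ Finset.mem_univ i
    simpa using (Finset.mem_image.mp this)
  -- each color class of a proper coloring has card = P.card
  have hclass : ∀ (f : V → Fin (k + 1)), (∀ u v : V, G.Adj u v → f u ≠ f v) →
      ∀ i : Fin (k + 1), (Finset.univ.filter fun x => f x = i).card = P.card := by
    intro f hf i
    apply Finset.card_bij (fun v _ => cov v)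
    · intro v _; exact (hcov v).1
    · intro u hu v hv he
      simp only [Finset.mem_filter] at hu hv
      have h1 : u ∈ cov v := he ▸ (hcov u).2
      exact hinj f hf (cov v) (hcov v).1 (Finset.mem_coe.mpr h1)
        (Finset.mem_coe.mpr (hcov v).2) (hu.2.trans hv.2.symm)
    · intro s hs
      obtain ⟨v, hvs, hfv⟩ := hsurj f hf s hs i
      exact ⟨v, by simp [hfv], (huniq v s ⟨hs, hvs⟩).symm⟩
  -- color classes are independent
  have hindep : ∀ (f : V → Fin (k + 1)), (∀ u v : V, G.Adj u v → f u ≠ f v) →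
      ∀ i : Fin (k + 1), IsIndep G ↑(Finset.univ.filter fun x => f x = i) := by
    intro f hf i u hu v hv hne hGadj
    simp only [Finset.coe_filter, Set.mem_setOf_eq] at hu hv
    exact hf u v hGadj (hu.2.trans hv.2.symm)
  -- a proper coloring exists
  obtain ⟨n, H, hH, ⟨e⟩⟩ := hG
  obtain ⟨g, hg⟩ := exists_coloring hH
  set f0 : V → Fin (k + 1) := fun v => g (e v) with hf0def
  have hf0 : ∀ u v : V, G.Adj u v → f0 u ≠ f0 v := fun u v h =>
    hg (e u) (e v) (e.map_adj_iff.mpr h)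
  -- indepNum G = P.card
  have hnum : indepNum G = P.card := by
    have hmem : P.card ∈ {m | ∃ I : Finset V, IsIndep G ↑I ∧ I.card = m} :=
      ⟨Finset.univ.filter fun x => f0 x = 0, hindep f0 hf0 0, hclass f0 hf0 0⟩
    have hub : ∀ m ∈ {m | ∃ I : Finset V, IsIndep G ↑I ∧ I.card = m}, m ≤ P.card := by
      rintro m ⟨I, hI, rfl⟩; exact hbound I hI
    exact le_antisymm (csSup_le ⟨P.card, hmem⟩ hub) (le_csSup ⟨P.card, hub⟩ hmem)
  -- card V = P.card * (k+1)
  have hcardV : Fintype.card V = P.card * (k + 1) := by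
    have huniv : (Finset.univ : Finset V) = P.biUnion id := by
      ext v
      simp only [Finset.mem_univ, Finset.mem_biUnion, id, true_iff]
      exact ⟨cov v, (hcov v).1, (hcov v).2⟩
    have hdisj : ∀ s ∈ P, ∀ t ∈ P, s ≠ t → Disjoint (id s) (id t) := by
      intro s hs t ht hne
      rw [Finset.disjoint_left]
      intro v hvs hvt
      exact hne ((huniq v s ⟨hs, hvs⟩).trans (huniq v t ⟨ht, hvt⟩).symm)
    rw [← Finset.card_univ, huniv, Finset.card_biUnion hdisj]
    calc ∑ u ∈ P, (id u).card = ∑ _u ∈ P, (k + 1) :=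
          Finset.sum_congr rfl fun s hs => (hP.1 s hs).1
      _ = P.card * (k + 1) := by rw [Finset.sum_const, smul_eq_mul]
  refine ⟨?_, ?_, fun f hf i => ⟨hindep f hf i, (hclass f hf i).trans hnum.symm⟩⟩
  · intro v
    refine ⟨Finset.univ.filter fun x => f0 x = f0 v, hindep f0 hf0 (f0 v), by simp, ?_⟩
    rw [hclass f0 hf0 (f0 v), hnum]
  · rw [hnum, hcardV, Nat.mul_div_cancel _ (Nat.succ_pos k)]
end

section
/- Every k-tree has at most one perfect (k+1)-cover. -/
/-! ### Auxiliary material for the proof -/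

lemma adj_castSucc {n : ℕ} (G : SimpleGraph (Fin n)) (s : Finset (Fin n)) (u v : Fin n) :
    (addVertex G s).Adj u.castSucc v.castSucc ↔ G.Adj u v := by
  simp only [addVertex, SimpleGraph.fromRel_adj]
  constructor
  · rintro ⟨hne, (⟨a,b,ha,hb,hab⟩|⟨h,_⟩)|(⟨a,b,ha,hb,hab⟩|⟨h,_⟩)⟩
    · rw [Fin.castSucc_inj] at ha hb; subst ha; subst hb; exact hab
    · exact absurd h (Fin.castSucc_lt_last u).ne
    · rw [Fin.castSucc_inj] at ha hb; subst ha; subst hb; exact hab.symm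
    · exact absurd h (Fin.castSucc_lt_last v).ne
  · intro h
    exact ⟨by simp [Fin.castSucc_inj, h.ne], Or.inl (Or.inl ⟨u, v, rfl, rfl, h⟩)⟩

lemma adj_last {n : ℕ} (G : SimpleGraph (Fin n)) (s : Finset (Fin n)) (v : Fin (n+1)) :
    (addVertex G s).Adj (Fin.last n) v ↔ v ∈ s.image Fin.castSucc := by
  simp only [addVertex, SimpleGraph.fromRel_adj, Finset.mem_image]
  constructor
  · rintro ⟨hne, (⟨a,b,ha,hb,hab⟩|⟨h,b,hb,hbv⟩)|(⟨a,b,ha,hb,hab⟩|⟨h,b,hb,hbv⟩)⟩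
    · exact absurd ha (Fin.castSucc_lt_last a).ne'
    · exact ⟨b, hb, hbv.symm⟩
    · exact absurd hb (Fin.castSucc_lt_last b).ne'
    · exact absurd hbv (Fin.castSucc_lt_last b).ne'
  · rintro ⟨b, hb, rfl⟩
    exact ⟨(Fin.castSucc_lt_last b).ne', Or.inl (Or.inr ⟨trivial, b, hb, rfl⟩)⟩

/-- The image of a finset under `Fin.castSucc`. -/
noncomputable def upF {n : ℕ} (u : Finset (Fin n)) : Finset (Fin (n+1)) :=
  u.image Fin.castSucc

/-- The preimage of a finset under `Fin.castSucc`. -/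
noncomputable def downF {n : ℕ} (t : Finset (Fin (n+1))) : Finset (Fin n) :=
  t.preimage Fin.castSucc (Fin.castSucc_injective n).injOn

lemma mem_upF {n : ℕ} {u : Finset (Fin n)} {w : Fin n} : w.castSucc ∈ upF u ↔ w ∈ u := by
  simp [upF, Fin.castSucc_inj]

lemma last_not_mem_upF {n : ℕ} {u : Finset (Fin n)} : Fin.last n ∉ upF u := by
  simp only [upF, Finset.mem_image]
  rintro ⟨a, _, ha⟩
  exact (Fin.castSucc_lt_last a).ne ha

lemma down_up {n : ℕ} (u : Finset (Fin n)) : downF (upF u) = u := by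
  ext w; simp [downF, upF, Fin.castSucc_inj]

lemma up_down {n : ℕ} (t : Finset (Fin (n+1))) (ht : Fin.last n ∉ t) : upF (downF t) = t := by
  ext w
  simp only [upF, downF, Finset.mem_image, Finset.mem_preimage]
  constructor
  · rintro ⟨a, ha, rfl⟩; exact ha
  · intro hw
    rcases Fin.exists_castSucc_eq.2 (fun h => ht (h ▸ hw)) with ⟨a, rfl⟩
    exact ⟨a, hw, rfl⟩

lemma card_downF {n : ℕ} (t : Finset (Fin (n+1))) (ht : Fin.last n ∉ t) :
    (downF t).card = t.card := by
  conv_rhs => rw [← up_down t ht]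
  exact (Finset.card_image_of_injective _ (Fin.castSucc_injective n)).symm

lemma clique_up_iff {n : ℕ} (G : SimpleGraph (Fin n)) (s : Finset (Fin n))
    (u : Finset (Fin n)) :
    (addVertex G s).IsClique ↑(upF u) ↔ G.IsClique ↑u := by
  constructor
  · intro h a ha b hb hab
    exact (adj_castSucc G s a b).1 <| h (by exact_mod_cast mem_upF.2 ha)
      (by exact_mod_cast mem_upF.2 hb) (by simpa [Fin.castSucc_inj])
  · intro h a ha b hb hab
    simp only [Finset.coe_image, Set.mem_image, Finset.mem_coe, upF] at ha hb
    obtain ⟨a', ha', rfl⟩ := ha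
    obtain ⟨b', hb', rfl⟩ := hb
    exact (adj_castSucc G s a' b').2 <| h ha' hb' (by simpa [Fin.castSucc_inj] using hab)

/-- Forcing: a `(k+1)`-clique containing the last vertex equals `insert last (upF s)`. -/
lemma clique_last_eq {k n : ℕ} (G : SimpleGraph (Fin n)) (s : Finset (Fin n))
    (hs : s.card = k) (t : Finset (Fin (n+1))) (htc : t.card = k + 1)
    (htcl : (addVertex G s).IsClique ↑t) (hlt : Fin.last n ∈ t) :
    t = insert (Fin.last n) (upF s) := by
  have hsub : t.erase (Fin.last n) ⊆ upF s := by
    intro w hw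
    have hw' := Finset.mem_erase.1 hw
    have : (addVertex G s).Adj (Fin.last n) w :=
      htcl (by exact_mod_cast hlt) (by exact_mod_cast hw'.2) (Ne.symm hw'.1)
    exact (adj_last G s w).1 this
  have hcard : (t.erase (Fin.last n)).card = (upF s).card := by
    rw [Finset.card_erase_of_mem hlt, htc, Nat.add_sub_cancel, upF,
      Finset.card_image_of_injective _ (Fin.castSucc_injective n), hs]
  have heq : t.erase (Fin.last n) = upF s := Finset.eq_of_subset_of_card_le hsub hcard.ge
  rw [← heq, Finset.insert_erase hlt]

lemma mem_downF {n : ℕ} {t : Finset (Fin (n+1))} {w : Fin n} :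
    w ∈ downF t ↔ w.castSucc ∈ t := by simp [downF]

/-- A good family: `(k+1)`-cliques, with each vertex in at most one member. -/
def Good {m : ℕ} (k : ℕ) (G : SimpleGraph (Fin m)) (P : Finset (Finset (Fin m))) : Prop :=
  (∀ t ∈ P, t.card = k + 1 ∧ G.IsClique ↑t) ∧
    ∀ v : Fin m, ∀ t₁ ∈ P, ∀ t₂ ∈ P, v ∈ t₁ → v ∈ t₂ → t₁ = t₂

/-- `v` is covered by the family `P`. -/
def Cov {m : ℕ} (P : Finset (Finset (Fin m))) (v : Fin m) : Prop := ∃ t ∈ P, v ∈ t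

lemma good_down {k n : ℕ} {G : SimpleGraph (Fin n)} {s : Finset (Fin n)}
    {P : Finset (Finset (Fin (n+1)))} (hP : Good k (addVertex G s) P)
    (hl : ∀ t ∈ P, Fin.last n ∉ t) :
    Good k G (P.image downF) ∧ (∀ u, u ∈ P.image downF ↔ upF u ∈ P) ∧
      (∀ w : Fin n, Cov (P.image downF) w ↔ Cov P w.castSucc) := by
  have hmem : ∀ u, u ∈ P.image downF ↔ upF u ∈ P := by
    intro u
    simp only [Finset.mem_image]
    constructor
    · rintro ⟨t, ht, rfl⟩; rwa [up_down t (hl t ht)]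
    · intro h; exact ⟨upF u, h, down_up u⟩
  refine ⟨⟨?_, ?_⟩, hmem, ?_⟩
  · intro u hu
    have h := hP.1 _ ((hmem u).1 hu)
    constructor
    · rw [← down_up u, card_downF _ last_not_mem_upF]; exact h.1
    · exact (clique_up_iff G s u).1 h.2
  · intro w u₁ hu₁ u₂ hu₂ hw₁ hw₂
    have := hP.2 w.castSucc (upF u₁) ((hmem u₁).1 hu₁) (upF u₂) ((hmem u₂).1 hu₂)
      (mem_upF.2 hw₁) (mem_upF.2 hw₂)
    rw [← down_up u₁, this, down_up]
  · intro w
    constructor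
    · rintro ⟨u, hu, hw⟩
      exact ⟨upF u, (hmem u).1 hu, mem_upF.2 hw⟩
    · rintro ⟨t, ht, hw⟩
      exact ⟨downF t, Finset.mem_image_of_mem _ ht, mem_downF.2 hw⟩

/-- Main auxiliary step: if all blocks avoid the last vertex, uniqueness descends. -/
lemma step_aux {k n : ℕ} {G : SimpleGraph (Fin n)} {s : Finset (Fin n)}
    (ih : ∀ P Q : Finset (Finset (Fin n)), Good k G P → Good k G Q →
      (∀ v, Cov P v ↔ Cov Q v) → P = Q)
    (P Q : Finset (Finset (Fin (n+1))))
    (hP : Good k (addVertex G s) P) (hQ : Good k (addVertex G s) Q)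
    (hlP : ∀ t ∈ P, Fin.last n ∉ t) (hlQ : ∀ t ∈ Q, Fin.last n ∉ t)
    (hcov : ∀ w : Fin n, Cov P w.castSucc ↔ Cov Q w.castSucc) : P = Q := by
  obtain ⟨hgP, hmP, hcP⟩ := good_down hP hlP
  obtain ⟨hgQ, hmQ, hcQ⟩ := good_down hQ hlQ
  have h0 : P.image downF = Q.image downF := by
    refine ih _ _ hgP hgQ fun w => ?_
    rw [hcP, hcQ, hcov]
  ext t
  constructor
  · intro ht
    have : downF t ∈ Q.image downF := h0 ▸ Finset.mem_image_of_mem _ ht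
    have := (hmQ _).1 this
    rwa [up_down t (hlP t ht)] at this
  · intro ht
    have : downF t ∈ P.image downF := h0 ▸ Finset.mem_image_of_mem _ ht
    have := (hmP _).1 this
    rwa [up_down t (hlQ t ht)] at this

/-- The key uniqueness lemma for `k`-trees on `Fin n`. -/
lemma key_uniq {k n : ℕ} {G : SimpleGraph (Fin n)} (hKT : IsKTreeOn k n G) :
    ∀ P Q : Finset (Finset (Fin n)), Good k G P → Good k G Q →
      (∀ v, Cov P v ↔ Cov Q v) → P = Q := by
  induction hKT with
  | base =>
    intro P Q hP hQ _
    have hPe : P = ∅ := by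
      rw [Finset.eq_empty_iff_forall_notMem]
      intro t ht
      have h1 := (hP.1 t ht).1
      have h2 : t.card ≤ k := by simpa using Finset.card_le_univ t
      omega
    have hQe : Q = ∅ := by
      rw [Finset.eq_empty_iff_forall_notMem]
      intro t ht
      have h1 := (hQ.1 t ht).1
      have h2 : t.card ≤ k := by simpa using Finset.card_le_univ t
      omega
    rw [hPe, hQe]
  | @extend n G s _ hsc hscl ih =>
    intro P Q hP hQ hcov
    set T : Finset (Fin (n+1)) := insert (Fin.last n) (upF s) with hT
    have hforceP : ∀ t ∈ P, Fin.last n ∈ t → t = T := fun t ht hlt =>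
      clique_last_eq G s hsc t (hP.1 t ht).1 (hP.1 t ht).2 hlt
    have hforceQ : ∀ t ∈ Q, Fin.last n ∈ t → t = T := fun t ht hlt =>
      clique_last_eq G s hsc t (hQ.1 t ht).1 (hQ.1 t ht).2 hlt
    by_cases hv : Cov P (Fin.last n)
    · -- the last vertex is covered; its block is T in both families
      have hvQ : Cov Q (Fin.last n) := (hcov _).1 hv
      obtain ⟨t, ht, hlt⟩ := hv
      have hTP : T ∈ P := hforceP t ht hlt ▸ ht
      obtain ⟨t', ht', hlt'⟩ := hvQ
      have hTQ : T ∈ Q := hforceQ t' ht' hlt' ▸ ht'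
      have hgP' : Good k (addVertex G s) (P.erase T) :=
        ⟨fun u hu => hP.1 u (Finset.mem_of_mem_erase hu),
         fun v t₁ h₁ t₂ h₂ => hP.2 v t₁ (Finset.mem_of_mem_erase h₁) t₂
           (Finset.mem_of_mem_erase h₂)⟩
      have hgQ' : Good k (addVertex G s) (Q.erase T) :=
        ⟨fun u hu => hQ.1 u (Finset.mem_of_mem_erase hu),
         fun v t₁ h₁ t₂ h₂ => hQ.2 v t₁ (Finset.mem_of_mem_erase h₁) t₂
           (Finset.mem_of_mem_erase h₂)⟩
      have hlP' : ∀ t ∈ P.erase T, Fin.last n ∉ t := by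
        intro u hu hl
        exact (Finset.mem_erase.1 hu).1 (hforceP u (Finset.mem_of_mem_erase hu) hl)
      have hlQ' : ∀ t ∈ Q.erase T, Fin.last n ∉ t := by
        intro u hu hl
        exact (Finset.mem_erase.1 hu).1 (hforceQ u (Finset.mem_of_mem_erase hu) hl)
      have hcastT : ∀ w : Fin n, w.castSucc ∈ T ↔ w ∈ s := by
        intro w
        simp only [hT, Finset.mem_insert]
        constructor
        · rintro (h | h)
          · exact absurd h (Fin.castSucc_lt_last w).ne
          · exact mem_upF.1 h
        · intro h; exact Or.inr (mem_upF.2 h)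
      have herasecov : ∀ (R : Finset (Finset (Fin (n+1)))), T ∈ R →
          (∀ t ∈ R, ∀ t' ∈ R, ∀ v : Fin (n+1), v ∈ t → v ∈ t' → t = t') →
          ∀ w : Fin n, (Cov (R.erase T) w.castSucc ↔ Cov R w.castSucc ∧ w ∉ s) := by
        intro R hTR huniq w
        constructor
        · rintro ⟨t, ht, hw⟩
          have ht' := Finset.mem_of_mem_erase ht
          refine ⟨⟨t, ht', hw⟩, fun hws => ?_⟩
          have : t = T := huniq t ht' T hTR w.castSucc hw ((hcastT w).2 hws)
          exact (Finset.mem_erase.1 ht).1 this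
        · rintro ⟨⟨t, ht, hw⟩, hws⟩
          refine ⟨t, Finset.mem_erase.2 ⟨?_, ht⟩, hw⟩
          rintro rfl
          exact hws ((hcastT w).1 hw)
      have huniqP : ∀ t ∈ P, ∀ t' ∈ P, ∀ v : Fin (n+1), v ∈ t → v ∈ t' → t = t' :=
        fun t ht t' ht' v hvt hvt' => hP.2 v t ht t' ht' hvt hvt'
      have huniqQ : ∀ t ∈ Q, ∀ t' ∈ Q, ∀ v : Fin (n+1), v ∈ t → v ∈ t' → t = t' :=
        fun t ht t' ht' v hvt hvt' => hQ.2 v t ht t' ht' hvt hvt'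
      have hPQ' : P.erase T = Q.erase T := by
        refine step_aux ih _ _ hgP' hgQ' hlP' hlQ' fun w => ?_
        rw [herasecov P hTP huniqP w, herasecov Q hTQ huniqQ w, hcov]
      calc P = insert T (P.erase T) := (Finset.insert_erase hTP).symm
        _ = insert T (Q.erase T) := by rw [hPQ']
        _ = Q := Finset.insert_erase hTQ
    · -- the last vertex is uncovered in both families: no block contains it
      have hvQ : ¬ Cov Q (Fin.last n) := fun h => hv ((hcov _).2 h)
      have hlP : ∀ t ∈ P, Fin.last n ∉ t := fun t ht hl => hv ⟨t, ht, hl⟩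
      have hlQ : ∀ t ∈ Q, Fin.last n ∉ t := fun t ht hl => hvQ ⟨t, ht, hl⟩
      exact step_aux ih _ _ hP hQ hlP hlQ fun w => hcov w.castSucc

/-- A perfect cover transfers along a graph isomorphism. -/
lemma perfectCover_image {V : Type} {n : ℕ} {G : SimpleGraph V} {H : SimpleGraph (Fin n)}
    (e : G ≃g H) (k : ℕ) (P : Finset (Finset V)) (hP : IsPerfectCover G (k+1) P) :
    IsPerfectCover H (k+1) (P.image (Finset.image e)) := by
  constructor
  · intro t ht
    obtain ⟨u, hu, rfl⟩ := Finset.mem_image.1 ht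
    refine ⟨by rw [Finset.card_image_of_injective _ (RelIso.injective e)]; exact (hP.1 u hu).1, ?_⟩
    intro a ha b hb hab
    simp only [Finset.coe_image, Set.mem_image, Finset.mem_coe] at ha hb
    obtain ⟨x, hx, rfl⟩ := ha
    obtain ⟨y, hy, rfl⟩ := hb
    exact e.map_adj_iff.2 <| (hP.1 u hu).2 hx hy (fun h => hab (by rw [h]))
  · intro v
    obtain ⟨u, ⟨hu, hvu⟩, huniq⟩ := hP.2 (e.symm v)
    refine ⟨u.image e, ⟨Finset.mem_image_of_mem _ hu, ?_⟩, ?_⟩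
    · have : (e : V → Fin n) (e.symm v) ∈ u.image e := Finset.mem_image_of_mem _ hvu
      simpa using this
    · rintro t ⟨ht, hvt⟩
      obtain ⟨u', hu', rfl⟩ := Finset.mem_image.1 ht
      have : e.symm v ∈ u' := by
        obtain ⟨x, hx, hxe⟩ := Finset.mem_image.1 hvt
        have : x = e.symm v := by
          apply RelIso.injective e; simpa using hxe
        rwa [← this]
      rw [huniq u' ⟨hu', this⟩]

theorem stmt8 {V : Type} (G : SimpleGraph V) (k : ℕ) (hG : IsKTree k G)
    (P Q : Finset (Finset V)) (hP : IsPerfectCover G (k + 1) P)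
    (hQ : IsPerfectCover G (k + 1) Q) : P = Q := by
  obtain ⟨n, H, hH, ⟨e⟩⟩ := hG
  have hP' := perfectCover_image e k P hP
  have hQ' := perfectCover_image e k Q hQ
  have hgood : ∀ R : Finset (Finset (Fin n)), IsPerfectCover H (k+1) R → Good k H R := by
    intro R hR
    refine ⟨hR.1, fun v t₁ h₁ t₂ h₂ hv₁ hv₂ => ?_⟩
    obtain ⟨u, _, huniq⟩ := hR.2 v
    rw [huniq t₁ ⟨h₁, hv₁⟩, huniq t₂ ⟨h₂, hv₂⟩]
  have hcov : ∀ (R : Finset (Finset (Fin n))), IsPerfectCover H (k+1) R →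
      ∀ v, Cov R v := by
    intro R hR v
    obtain ⟨u, ⟨hu, hv⟩, _⟩ := hR.2 v
    exact ⟨u, hu, hv⟩
  have h := key_uniq hH _ _ (hgood _ hP') (hgood _ hQ')
    (fun v => iff_of_true (hcov _ hP' v) (hcov _ hQ' v))
  exact Finset.image_injective (Finset.image_injective (RelIso.injective e)) h
end

section
/- For every graph H, the corona H ∘ K_1 is an α-excellent graph. -/
/-- The corona `H ∘ K₁`: for each vertex `v` of `H` add a new pendant vertex
`Sum.inr v` joined only to `Sum.inl v`. -/
def corona {V : Type} (H : SimpleGraph V) : SimpleGraph (V ⊕ V) :=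
  SimpleGraph.fromRel fun a b =>
    (∃ u v : V, a = Sum.inl u ∧ b = Sum.inl v ∧ H.Adj u v) ∨
      (∃ v : V, a = Sum.inl v ∧ b = Sum.inr v)

lemma corona_bound {V : Type} [Fintype V] (H : SimpleGraph V)
    (I : Finset (V ⊕ V)) (hI : IsIndep (corona H) ↑I) :
    I.card ≤ Fintype.card V := by
  classical
  rw [← Finset.card_univ]
  apply Finset.card_le_card_of_injOn (Sum.elim id id)
    (fun _ _ => Finset.mem_univ _)
  intro a ha b hb hab
  by_contra hne
  have hadj : ¬ (corona H).Adj a b := hI ha hb hne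
  apply hadj
  cases a with
  | inl u =>
    cases b with
    | inl w =>
      simp only [Sum.elim_inl, id] at hab
      exact absurd (by rw [hab]) hne
    | inr w =>
      simp only [Sum.elim_inl, Sum.elim_inr, id] at hab
      subst hab
      simp [corona, SimpleGraph.fromRel_adj]
  | inr u =>
    cases b with
    | inl w =>
      simp only [Sum.elim_inl, Sum.elim_inr, id] at hab
      subst hab
      simp [corona, SimpleGraph.fromRel_adj]
    | inr w =>
      simp only [Sum.elim_inr, id] at hab
      exact absurd (by rw [hab]) hne

open scoped Classical in
lemma pendants_indep {V : Type} [Fintype V] (H : SimpleGraph V) :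
    IsIndep (corona H) ↑(Finset.univ.image (Sum.inr : V → V ⊕ V)) := by
  classical
  intro a ha b hb hne
  simp only [Finset.coe_image, Set.mem_image] at ha hb
  obtain ⟨u, _, rfl⟩ := ha
  obtain ⟨w, _, rfl⟩ := hb
  simp [corona, SimpleGraph.fromRel_adj]

lemma indepNum_corona {V : Type} [Fintype V] (H : SimpleGraph V) :
    indepNum (corona H) = Fintype.card V := by
  classical
  have hmem : Fintype.card V ∈
      {n | ∃ I : Finset (V ⊕ V), IsIndep (corona H) ↑I ∧ I.card = n} := by
    refine ⟨Finset.univ.image Sum.inr, pendants_indep H, ?_⟩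
    rw [Finset.card_image_of_injective _ Sum.inr_injective, Finset.card_univ]
  apply le_antisymm
  · apply csSup_le ⟨_, hmem⟩
    rintro n ⟨I, hI, rfl⟩
    exact corona_bound H I hI
  · exact le_csSup ⟨Fintype.card V, by rintro n ⟨I, hI, rfl⟩; exact corona_bound H I hI⟩ hmem

theorem stmt11 {V : Type} [Fintype V] (H : SimpleGraph V) :
    AlphaExcellent (corona H) := by
  classical
  intro w
  rw [indepNum_corona]
  cases w with
  | inr v =>
    exact ⟨Finset.univ.image Sum.inr, pendants_indep H,
      Finset.mem_image_of_mem _ (Finset.mem_univ v),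
      by rw [Finset.card_image_of_injective _ Sum.inr_injective, Finset.card_univ]⟩
  | inl v =>
    set f : V → V ⊕ V := fun u => if u = v then Sum.inl v else Sum.inr u with hf
    have hinj : Function.Injective f := by
      intro a b hab
      simp only [hf] at hab
      by_cases ha : a = v <;> by_cases hb : b = v <;>
        simp [ha, hb] at hab <;> simp [ha, hb, hab]
    refine ⟨Finset.univ.image f, ?_, ?_, ?_⟩
    · intro a ha b hb hne
      simp only [Finset.coe_image, Set.mem_image] at ha hb
      obtain ⟨x, _, rfl⟩ := ha
      obtain ⟨y, _, rfl⟩ := hb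
      by_cases hx : x = v <;> by_cases hy : y = v <;>
        first
          | exact absurd (by rw [hx, hy]) hne
          | simp [hf, hx, hy, corona, SimpleGraph.fromRel_adj]
    · exact Finset.mem_image.mpr ⟨v, Finset.mem_univ v, by simp [hf]⟩
    · rw [Finset.card_image_of_injective _ hinj, Finset.card_univ]
end

section
/- Every finite graph is an induced subgraph of some α-excellent graph. -/
open Sum Finset

theorem stmt12 {V : Type} [Fintype V] (G : SimpleGraph V) :
    ∃ (m : ℕ) (G' : SimpleGraph (Fin m)) (f : V ↪ Fin m),
      AlphaExcellent G' ∧ ∀ u v : V, G'.Adj (f u) (f v) ↔ G.Adj u v := by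
  classical
  set n := Fintype.card V with hn
  set m := Fintype.card (V ⊕ V) with hm
  let e : Fin m ≃ (V ⊕ V) := (Fintype.equivFin (V ⊕ V)).symm
  -- the corona of G with K1 : attach a pendant vertex to each vertex
  let Cor : SimpleGraph (V ⊕ V) :=
  { Adj := fun x y => match x, y with
      | inl u, inl v => G.Adj u v
      | inl u, inr v => u = v
      | inr u, inl v => u = v
      | inr _, inr _ => False
    symm := ⟨by rintro (u|u) (v|v) h <;> first | exact h.symm | exact h.elim⟩
    loopless := ⟨by rintro (u|u) h; exacts [G.loopless.irrefl u h, h]⟩ }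
  let H : SimpleGraph (Fin m) := Cor.comap e
  have hHadj : ∀ a b : Fin m, H.Adj a b ↔ Cor.Adj (e a) (e b) := fun a b => Iff.rfl
  -- upper bound : every independent set has card ≤ n
  have hub : ∀ I : Finset (Fin m), IsIndep H ↑I → I.card ≤ n := by
    intro I hI
    have hinj : Set.InjOn (fun a => Sum.elim id id (e a) : Fin m → V) ↑I := by
      intro a ha b hb hab
      by_contra hne
      have hIa : ¬ H.Adj a b := hI ha hb hne
      rcases hea : e a with u | u <;> rcases heb : e b with v | v <;>
        simp only [hea, heb, Sum.elim_inl, Sum.elim_inr, id] at hab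
      · exact hne (e.injective (by rw [hea, heb, hab]))
      · exact hIa (by rw [hHadj, hea, heb]; exact hab)
      · exact hIa (by rw [hHadj, hea, heb]; exact hab)
      · exact hne (e.injective (by rw [hea, heb, hab]))
    calc I.card = (I.image (fun a => Sum.elim id id (e a))).card :=
          (Finset.card_image_of_injOn hinj).symm
      _ ≤ Fintype.card V := Finset.card_le_univ _
  -- the set of all pendant vertices
  let P : Finset (Fin m) := Finset.univ.image (fun v => e.symm (inr v))
  have hPmem : ∀ v : V, e.symm (inr v) ∈ P := by
    intro v; exact Finset.mem_image_of_mem _ (Finset.mem_univ v)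
  have hPcard : P.card = n := by
    rw [Finset.card_image_of_injective _
      (fun a b h => Sum.inr_injective (e.symm.injective h)), Finset.card_univ]
  have hPindep : IsIndep H ↑P := by
    intro x hx y hy hxy
    simp only [Finset.coe_image, Set.mem_image, Finset.mem_coe, P] at hx hy
    obtain ⟨u, -, rfl⟩ := hx
    obtain ⟨v, -, rfl⟩ := hy
    rw [hHadj]
    simp only [Equiv.apply_symm_apply]
    exact id
  -- indepNum H = n
  have hindep : indepNum H = n := by
    have hne : n ∈ {k | ∃ I : Finset (Fin m), IsIndep H ↑I ∧ I.card = k} :=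
      ⟨P, hPindep, hPcard⟩
    have hbdd : ∀ k ∈ {k | ∃ I : Finset (Fin m), IsIndep H ↑I ∧ I.card = k}, k ≤ n := by
      rintro k ⟨I, hI, rfl⟩; exact hub I hI
    exact le_antisymm (csSup_le ⟨n, hne⟩ hbdd) (le_csSup ⟨n, hbdd⟩ hne)
  -- for each v, the maximum independent set containing inl v
  have hS : ∀ v : V, ∃ I : Finset (Fin m),
      IsIndep H ↑I ∧ e.symm (inl v) ∈ I ∧ I.card = n := by
    intro v
    refine ⟨insert (e.symm (inl v))
      ((Finset.univ.erase v).image fun w => e.symm (inr w)), ?_, Finset.mem_insert_self _ _, ?_⟩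
    · intro x hx y hy hxy
      simp only [Finset.coe_insert, Set.mem_insert_iff, Finset.coe_image, Set.mem_image,
        Finset.mem_coe, Finset.mem_erase] at hx hy
      rw [hHadj]
      rcases hx with rfl | ⟨u, hu, rfl⟩ <;> rcases hy with rfl | ⟨w, hw, rfl⟩
      · exact absurd rfl hxy
      · simp only [Equiv.apply_symm_apply]
        exact fun h => hw.1 (h ▸ rfl)
      · simp only [Equiv.apply_symm_apply]
        exact fun h => hu.1 (h ▸ rfl)
      · simp only [Equiv.apply_symm_apply]
        exact id
    · have hnot : e.symm (inl v) ∉ (Finset.univ.erase v).image fun w => e.symm (inr w) := by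
        simp only [Finset.mem_image]
        rintro ⟨w, -, hw⟩
        exact Sum.inl_ne_inr (e.symm.injective hw.symm)
      rw [Finset.card_insert_of_notMem hnot,
        Finset.card_image_of_injective _
          (fun a b h => Sum.inr_injective (e.symm.injective h)),
        Finset.card_erase_of_mem (Finset.mem_univ v), Finset.card_univ, ← hn]
      have : 1 ≤ n := Fintype.card_pos_iff.mpr ⟨v⟩
      omega
  refine ⟨m, H, ⟨fun v => e.symm (inl v),
      fun a b h => Sum.inl_injective (e.symm.injective h)⟩, ?_, ?_⟩
  · intro w
    rcases hw : e w with v | v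
    · have hwe : w = e.symm (inl v) := by rw [← hw, Equiv.symm_apply_apply]
      obtain ⟨I, hI, hmem, hcard⟩ := hS v
      exact ⟨I, hI, hwe ▸ hmem, hcard.trans hindep.symm⟩
    · have hwe : w = e.symm (inr v) := by rw [← hw, Equiv.symm_apply_apply]
      exact ⟨P, hPindep, hwe ▸ hPmem v, hPcard.trans hindep.symm⟩
  · intro u v
    rw [hHadj]
    show Cor.Adj (e (e.symm (inl u))) (e (e.symm (inl v))) ↔ G.Adj u v
    simp only [Function.Embedding.coeFn_mk, Equiv.apply_symm_apply]
    exact Iff.rfl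
end

section
/- Every 2-tree is an induced subgraph of an α-excellent 2-tree. -/
namespace St13

lemma addVertex_adj {m : ℕ} (G : SimpleGraph (Fin m)) (s : Finset (Fin m)) (u v : Fin (m+1)) :
    (addVertex G s).Adj u v ↔
      (∃ (hu : u.val < m) (hv : v.val < m), G.Adj ⟨u.val, hu⟩ ⟨v.val, hv⟩) ∨
      (u.val = m ∧ ∃ x ∈ s, v.val = x.val) ∨
      (v.val = m ∧ ∃ x ∈ s, u.val = x.val) := by
  simp only [addVertex, SimpleGraph.fromRel_adj]
  constructor
  · rintro ⟨hne, (⟨u',v',rfl,rfl,h⟩|⟨rfl,v',hv,rfl⟩)|(⟨u',v',rfl,rfl,h⟩|⟨rfl,u',hu,rfl⟩)⟩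
    · exact Or.inl ⟨u'.2, v'.2, by simpa using h⟩
    · exact Or.inr (Or.inl ⟨rfl, v', hv, rfl⟩)
    · exact Or.inl ⟨v'.2, u'.2, by simpa using h.symm⟩
    · exact Or.inr (Or.inr ⟨rfl, u', hu, rfl⟩)
  · rintro (⟨hu, hv, h⟩ | ⟨hu, x, hx, hv⟩ | ⟨hv, x, hx, hu⟩)
    · refine ⟨fun he => h.ne (by cases he; rfl), Or.inl (Or.inl ⟨⟨u.val,hu⟩,⟨v.val,hv⟩, by simp [Fin.ext_iff], by simp [Fin.ext_iff], h⟩)⟩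
    · refine ⟨fun he => by rw [he] at hu; omega, Or.inl (Or.inr ⟨by simp [Fin.ext_iff, hu], x, hx, by simp [Fin.ext_iff, hv]⟩)⟩
    · refine ⟨fun he => by rw [he] at hu; omega, Or.inr (Or.inr ⟨by simp [Fin.ext_iff, hv], x, hx, by simp [Fin.ext_iff, hu]⟩)⟩

variable {n : ℕ}


def gB (n : ℕ) (g nb : ℕ → ℕ) (i : ℕ) (u v : ℕ) : Prop :=
  (u = n + 2*i ∧ (v = g i ∨ v = nb i ∨ v = n + 2*i + 1)) ∨ (u = n + 2*i + 1 ∧ v = g i)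

def gA (H : SimpleGraph (Fin n)) (g nb : ℕ → ℕ) (k : ℕ) (u v : ℕ) : Prop :=
  (∃ u' v' : Fin n, u = u'.val ∧ v = v'.val ∧ H.Adj u' v') ∨
  ∃ i < k, gB n g nb i u v ∨ gB n g nb i v u

def Tg (H : SimpleGraph (Fin n)) (g nb : ℕ → ℕ) (hg : ∀ i, g i < n) (hnb : ∀ i, nb i < n) :
    (k : ℕ) → SimpleGraph (Fin (n + 2*k))
  | 0 => H
  | k+1 =>
    addVertex (addVertex (Tg H g nb hg hnb k)
        {⟨g k, show g k < n + 2*k by have := hg k; omega⟩,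
         ⟨nb k, show nb k < n + 2*k by have := hnb k; omega⟩})
      {⟨g k, show g k < n + 2*k + 1 by have := hg k; omega⟩, Fin.last (n+2*k)}


lemma Tg_zero (H : SimpleGraph (Fin n)) (g nb : ℕ → ℕ) (hg : ∀ i, g i < n)
    (hnb : ∀ i, nb i < n) : Tg H g nb hg hnb 0 = H := rfl

lemma Tg_succ (H : SimpleGraph (Fin n)) (g nb : ℕ → ℕ) (hg : ∀ i, g i < n)
    (hnb : ∀ i, nb i < n) (k : ℕ) :
    Tg H g nb hg hnb (k+1) = addVertex (addVertex (Tg H g nb hg hnb k)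
        {⟨g k, show g k < n + 2*k by have := hg k; omega⟩,
         ⟨nb k, show nb k < n + 2*k by have := hnb k; omega⟩})
      {⟨g k, show g k < n + 2*k + 1 by have := hg k; omega⟩, Fin.last (n+2*k)} := rfl

lemma Tg_adj (H : SimpleGraph (Fin n)) (g nb : ℕ → ℕ) (hg : ∀ i, g i < n)
    (hnb : ∀ i, nb i < n) (k : ℕ) (u v : Fin (n + 2*k)) :
    (Tg H g nb hg hnb k).Adj u v ↔ gA H g nb k u.val v.val := by
  induction k with
  | zero =>
    simp only [Tg, gA, gB]
    constructor
    · intro h; exact Or.inl ⟨u, v, rfl, rfl, h⟩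
    · rintro (⟨u', v', hu, hv, h⟩ | ⟨i, hi, h⟩)
      · have h1 : u = u' := Fin.ext hu
        have h2 : v = v' := Fin.ext hv
        rw [h1, h2]; exact h
      · exfalso; omega
  | succ k ih =>
    have hgk := hg k; have hnbk := hnb k
    show (addVertex (addVertex (Tg H g nb hg hnb k) _) _).Adj u v ↔ _
    rw [addVertex_adj]
    constructor
    · rintro (⟨hu, hv, h⟩ | ⟨hu, x, hx, hv⟩ | ⟨hv, x, hx, hu⟩)
      · rw [addVertex_adj] at h
        rcases h with ⟨hu', hv', h⟩ | ⟨hu', x, hx, hv'⟩ | ⟨hv', x, hx, hu'⟩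
        · rw [ih] at h
          simp only [Fin.val_mk] at h
          rcases h with h | ⟨i, hi, h⟩
          · exact Or.inl h
          · exact Or.inr ⟨i, by omega, h⟩
        · simp only [Fin.val_mk] at hu' hv'
          simp only [Finset.mem_insert, Finset.mem_singleton] at hx
          rcases hx with rfl | rfl <;> simp only [Fin.val_mk] at hv'
          · exact Or.inr ⟨k, by omega, Or.inl (Or.inl ⟨hu', Or.inl hv'⟩)⟩
          · exact Or.inr ⟨k, by omega, Or.inl (Or.inl ⟨hu', Or.inr (Or.inl hv')⟩)⟩
        · simp only [Fin.val_mk] at hv' hu'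
          simp only [Finset.mem_insert, Finset.mem_singleton] at hx
          rcases hx with rfl | rfl <;> simp only [Fin.val_mk] at hu'
          · exact Or.inr ⟨k, by omega, Or.inr (Or.inl ⟨hv', Or.inl hu'⟩)⟩
          · exact Or.inr ⟨k, by omega, Or.inr (Or.inl ⟨hv', Or.inr (Or.inl hu')⟩)⟩
      · simp only [Finset.mem_insert, Finset.mem_singleton] at hx
        rcases hx with rfl | rfl <;> simp only [Fin.val_mk, Fin.val_last] at hv
        · exact Or.inr ⟨k, by omega, Or.inl (Or.inr ⟨hu, hv⟩)⟩
        · exact Or.inr ⟨k, by omega, Or.inr (Or.inl ⟨hv, Or.inr (Or.inr hu)⟩)⟩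
      · simp only [Finset.mem_insert, Finset.mem_singleton] at hx
        rcases hx with rfl | rfl <;> simp only [Fin.val_mk, Fin.val_last] at hu
        · exact Or.inr ⟨k, by omega, Or.inr (Or.inr ⟨hv, hu⟩)⟩
        · exact Or.inr ⟨k, by omega, Or.inl (Or.inl ⟨hu, Or.inr (Or.inr hv)⟩)⟩
    · rintro (⟨u', v', hu, hv, h⟩ | ⟨i, hi, hB⟩)
      · have hu2 := u'.2; have hv2 := v'.2
        refine Or.inl ⟨by omega, by omega, ?_⟩
        rw [addVertex_adj]
        refine Or.inl ⟨by simp only [Fin.val_mk]; omega, by simp only [Fin.val_mk]; omega, ?_⟩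
        rw [ih]
        exact Or.inl ⟨u', v', by simp [hu], by simp [hv], h⟩
      · by_cases hik : i < k
        · have hb : u.val < n + 2*k ∧ v.val < n + 2*k := by
            have := hg i; have := hnb i
            rcases hB with (⟨h1, h2 | h2 | h2⟩ | ⟨h1, h2⟩) | (⟨h1, h2 | h2 | h2⟩ | ⟨h1, h2⟩) <;>
              omega
          refine Or.inl ⟨by omega, by omega, ?_⟩
          rw [addVertex_adj]
          refine Or.inl ⟨by simp only [Fin.val_mk]; omega, by simp only [Fin.val_mk]; omega, ?_⟩
          rw [ih]
          exact Or.inr ⟨i, hik, hB⟩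
        · have hik' : i = k := by omega
          subst hik'
          have mem1 : (⟨g i, show g i < n + 2*i by omega⟩ : Fin (n+2*i)) ∈
              ({⟨g i, show g i < n + 2*i by omega⟩,
                ⟨nb i, show nb i < n + 2*i by omega⟩} : Finset (Fin (n+2*i))) := by
            simp
          have mem2 : (⟨nb i, show nb i < n + 2*i by omega⟩ : Fin (n+2*i)) ∈
              ({⟨g i, show g i < n + 2*i by omega⟩,
                ⟨nb i, show nb i < n + 2*i by omega⟩} : Finset (Fin (n+2*i))) := by
            simp
          have mem3 : (⟨g i, show g i < n + 2*i + 1 by omega⟩ : Fin (n+2*i+1)) ∈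
              ({⟨g i, show g i < n + 2*i + 1 by omega⟩,
                Fin.last (n+2*i)} : Finset (Fin (n+2*i+1))) := by
            simp
          have mem4 : (Fin.last (n+2*i)) ∈
              ({⟨g i, show g i < n + 2*i + 1 by omega⟩,
                Fin.last (n+2*i)} : Finset (Fin (n+2*i+1))) := by
            simp
          rcases hB with (⟨h1, h2 | h2 | h2⟩ | ⟨h1, h2⟩) | (⟨h1, h2 | h2 | h2⟩ | ⟨h1, h2⟩)
          · -- u = a, v = g i
            refine Or.inl ⟨by omega, by omega, ?_⟩
            rw [addVertex_adj]
            exact Or.inr (Or.inl ⟨by simp [h1], _, mem1, by simp [h2]⟩)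
          · refine Or.inl ⟨by omega, by omega, ?_⟩
            rw [addVertex_adj]
            exact Or.inr (Or.inl ⟨by simp [h1], _, mem2, by simp [h2]⟩)
          · -- u = a, v = b
            exact Or.inr (Or.inr ⟨by simpa using h2, _, mem4, by simpa using h1⟩)
          · -- u = b, v = g i
            exact Or.inr (Or.inl ⟨by simpa using h1, _, mem3, by simpa using h2⟩)
          · -- v = a, u = g i
            refine Or.inl ⟨by omega, by omega, ?_⟩
            rw [addVertex_adj]
            exact Or.inr (Or.inr ⟨by simp [h1], _, mem1, by simp [h2]⟩)
          · refine Or.inl ⟨by omega, by omega, ?_⟩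
            rw [addVertex_adj]
            exact Or.inr (Or.inr ⟨by simp [h1], _, mem2, by simp [h2]⟩)
          · -- v = a, u = b
            exact Or.inr (Or.inl ⟨by simpa using h2, _, mem4, by simpa using h1⟩)
          · -- v = b, u = g i
            exact Or.inr (Or.inr ⟨by simpa using h1, _, mem3, by simpa using h2⟩)
lemma two_le (H : SimpleGraph (Fin n)) (h : IsKTreeOn 2 n H) : 2 ≤ n := by
  induction h with
  | base => exact le_refl 2
  | extend s h hc hcl ih => omega


lemma exists_nbr (H : SimpleGraph (Fin n)) (h : IsKTreeOn 2 n H) (v : Fin n) :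
    ∃ w, H.Adj v w := by
  induction h with
  | base =>
    obtain ⟨w, hw⟩ := exists_ne v
    exact ⟨w, by simp [SimpleGraph.top_adj, hw.symm]⟩
  | @extend m G s h hc hcl ih =>
    by_cases hv : v.val < m
    · obtain ⟨w, hw⟩ := ih ⟨v.val, hv⟩
      refine ⟨⟨w.val, by omega⟩, ?_⟩
      rw [addVertex_adj]
      exact Or.inl ⟨hv, by simpa using w.2, by simpa using hw⟩
    · have hs : s.Nonempty := by
        rw [← Finset.card_pos, hc]; omega
      obtain ⟨x, hx⟩ := hs
      refine ⟨⟨x.val, by omega⟩, ?_⟩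
      rw [addVertex_adj]
      exact Or.inr (Or.inl ⟨by omega, x, hx, by simp⟩)


lemma Tg_isKTree (H : SimpleGraph (Fin n)) (g nb : ℕ → ℕ) (hg : ∀ i, g i < n)
    (hnb : ∀ i, nb i < n)
    (hadj : ∀ i, H.Adj ⟨g i, hg i⟩ ⟨nb i, hnb i⟩)
    (hH : IsKTreeOn 2 n H) (k : ℕ) :
    IsKTreeOn 2 (n + 2*k) (Tg H g nb hg hnb k) := by
  induction k with
  | zero => rw [Tg_zero]; exact hH
  | succ k ih =>
    have hgk := hg k; have hnbk := hnb k
    rw [Tg_succ]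
    have hne : (⟨g k, show g k < n + 2*k by omega⟩ : Fin (n+2*k)) ≠
        ⟨nb k, show nb k < n + 2*k by omega⟩ := by
      have := (hadj k).ne
      simp only [ne_eq, Fin.ext_iff, Fin.val_mk] at this ⊢
      exact this
    have hadj1 : (Tg H g nb hg hnb k).Adj ⟨g k, by omega⟩ ⟨nb k, by omega⟩ := by
      rw [Tg_adj]
      exact Or.inl ⟨⟨g k, hg k⟩, ⟨nb k, hnb k⟩, rfl, rfl, hadj k⟩
    have step1 : IsKTreeOn 2 (n + 2*k + 1) (addVertex (Tg H g nb hg hnb k)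
        {⟨g k, by omega⟩, ⟨nb k, by omega⟩}) := by
      refine IsKTreeOn.extend _ ih ?_ ?_
      · rw [Finset.card_insert_of_notMem (by simpa using hne), Finset.card_singleton]
      · intro a ha b hb hab
        simp only [Finset.coe_insert, Finset.coe_singleton, Set.mem_insert_iff,
          Set.mem_singleton_iff] at ha hb
        rcases ha with rfl | rfl <;> rcases hb with rfl | rfl
        · exact absurd rfl hab
        · exact hadj1
        · exact hadj1.symm
        · exact absurd rfl hab
    have hne2 : (⟨g k, show g k < n + 2*k + 1 by omega⟩ : Fin (n+2*k+1)) ≠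
        Fin.last (n+2*k) := by
      simp only [ne_eq, Fin.ext_iff, Fin.val_mk, Fin.val_last]; omega
    have hadj2 : (addVertex (Tg H g nb hg hnb k)
        {⟨g k, by omega⟩, ⟨nb k, by omega⟩}).Adj ⟨g k, by omega⟩ (Fin.last (n+2*k)) := by
      rw [addVertex_adj]
      exact Or.inr (Or.inr ⟨by simp, ⟨g k, by omega⟩, by simp, by simp⟩)
    refine IsKTreeOn.extend _ step1 ?_ ?_
    · rw [Finset.card_insert_of_notMem (by simpa using hne2), Finset.card_singleton]
    · intro a ha b hb hab
      simp only [Finset.coe_insert, Finset.coe_singleton, Set.mem_insert_iff,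
        Set.mem_singleton_iff] at ha hb
      rcases ha with rfl | rfl <;> rcases hb with rfl | rfl
      · exact absurd rfl hab
      · exact hadj2
      · exact hadj2.symm
      · exact absurd rfl hab
section Excellent
variable (hn : 2 ≤ n) (H : SimpleGraph (Fin n)) (g nb : ℕ → ℕ)
  (hg : ∀ i, g i < n) (hnb : ∀ i, nb i < n) (hgdef : ∀ i, i < n → g i = i)
  (G' : SimpleGraph (Fin (n + 2*n)))
  (hchar : ∀ u v, G'.Adj u v ↔ gA H g nb n u.val v.val)

def tv (u : Fin (n + 2*n)) : Fin n :=
  if h : u.val < n then ⟨u.val, h⟩ else ⟨(u.val - n)/2, by omega⟩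

lemma tv_val (u : Fin (n + 2*n)) :
    (tv u).val = if u.val < n then u.val else (u.val - n)/2 := by
  unfold tv; split <;> simp

def bvert (j : Fin n) : Fin (n + 2*n) := ⟨n + 2*j.val + 1, by omega⟩

lemma bvert_inj : Function.Injective (bvert (n := n)) := by
  intro a b h
  simp only [bvert, Fin.mk.injEq] at h
  exact Fin.ext (by omega)

lemma tv_bvert (j : Fin n) : tv (bvert j) = j := by
  have := j.2
  apply Fin.ext
  rw [tv_val]
  rw [if_neg (by simp only [bvert]; omega)]
  simp only [bvert]; omega

include hchar hgdef in
lemma adj_of_tv_eq (u v : Fin (n + 2*n)) (huv : u ≠ v) (ht : tv u = tv v) :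
    G'.Adj u v := by
  rw [hchar]
  have hu2 := u.2; have hv2 := v.2
  have htu := tv_val u
  have htv' := tv_val v
  have hteq : (tv u).val = (tv v).val := congrArg Fin.val ht
  have hne : u.val ≠ v.val := fun h => huv (Fin.ext h)
  by_cases hu : u.val < n <;> by_cases hv : v.val < n
  · rw [if_pos hu] at htu; rw [if_pos hv] at htv'
    exact absurd (by omega) hne
  · -- u original, v gadget of i := u.val
    rw [if_pos hu] at htu; rw [if_neg hv] at htv'
    right
    refine ⟨u.val, by omega, Or.inr ?_⟩
    rw [gB]
    have hgi := hgdef u.val (by omega)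
    omega
  · rw [if_neg hu] at htu; rw [if_pos hv] at htv'
    right
    refine ⟨v.val, by omega, Or.inl ?_⟩
    rw [gB]
    have hgi := hgdef v.val (by omega)
    omega
  · -- both gadget vertices, same triangle
    rw [if_neg hu] at htu; rw [if_neg hv] at htv'
    right
    refine ⟨(u.val - n)/2, by omega, ?_⟩
    rw [gB, gB]
    omega

include hchar hg hnb hgdef in
lemma tv_eq_of_adj_bvert (u : Fin (n + 2*n)) (j : Fin n) (h : G'.Adj u (bvert j)) :
    tv u = j := by
  rw [hchar] at h
  have hj2 := j.2
  have hu2 := u.2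
  apply Fin.ext
  rw [tv_val]
  rcases h with ⟨u', v', hu', hv', _⟩ | ⟨i, hi, hB | hB⟩
  · exfalso; have := v'.2; simp only [bvert] at hv'; omega
  · -- gB i u (bvert j)
    rw [gB] at hB
    simp only [bvert] at hB
    have := hg i; have := hnb i
    have hgi := hgdef i hi
    split <;> omega
  · rw [gB] at hB
    simp only [bvert] at hB
    have := hg i; have := hnb i
    have hgi := hgdef i hi
    split <;> omega

include hchar hg hnb hgdef in
lemma card_le_of_indep (I : Finset (Fin (n + 2*n))) (hI : IsIndep G' ↑I) :
    I.card ≤ n := by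
  have : I.card ≤ (Finset.univ : Finset (Fin n)).card := by
    apply Finset.card_le_card_of_injOn tv (fun _ _ => Finset.mem_univ _)
    intro a ha b hb hab
    by_contra hne
    exact hI ha hb hne (adj_of_tv_eq H g nb hgdef G' hchar a b hne hab)
  simpa using this

def Iset (u : Fin (n + 2*n)) : Finset (Fin (n + 2*n)) :=
  insert u ((Finset.univ.erase (tv u)).image bvert)

include hchar hg hnb hgdef in
lemma Iset_indep (u : Fin (n + 2*n)) : IsIndep G' ↑(Iset u) := by
  intro a ha b hb hab hadj
  simp only [Iset, Finset.coe_insert, Set.mem_insert_iff, Finset.coe_image,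
    Set.mem_image, Finset.mem_coe, Finset.mem_erase] at ha hb
  rcases ha with rfl | ⟨j, ⟨hj, -⟩, rfl⟩ <;> rcases hb with rfl | ⟨j', ⟨hj', -⟩, rfl⟩
  · exact hab rfl
  · exact hj' (tv_eq_of_adj_bvert H g nb hg hnb hgdef G' hchar a j' hadj).symm
  · exact hj (tv_eq_of_adj_bvert H g nb hg hnb hgdef G' hchar b j hadj.symm).symm
  · have := tv_eq_of_adj_bvert H g nb hg hnb hgdef G' hchar (bvert j) j' hadj
    rw [tv_bvert] at this
    exact hab (by rw [this])

include hn in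
lemma Iset_card (u : Fin (n + 2*n)) : (Iset u).card = n := by
  have hnotmem : u ∉ (Finset.univ.erase (tv u)).image bvert := by
    intro hmem
    simp only [Finset.mem_image, Finset.mem_erase, Finset.mem_univ, and_true] at hmem
    obtain ⟨j, hj, hju⟩ := hmem
    apply hj
    rw [← hju, tv_bvert]
  rw [Iset, Finset.card_insert_of_notMem hnotmem,
    Finset.card_image_of_injective _ bvert_inj,
    Finset.card_erase_of_mem (Finset.mem_univ _)]
  simp only [Finset.card_univ, Fintype.card_fin]
  omega

include hn hchar hg hnb hgdef in
lemma indepNum_eq : indepNum G' = n := by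
  have u : Fin (n + 2*n) := ⟨0, by omega⟩
  have hmem : n ∈ {c | ∃ I : Finset (Fin (n + 2*n)), IsIndep G' ↑I ∧ I.card = c} :=
    ⟨Iset u, Iset_indep H g nb hg hnb hgdef G' hchar u, Iset_card hn u⟩
  have hub : ∀ c ∈ {c | ∃ I : Finset (Fin (n + 2*n)), IsIndep G' ↑I ∧ I.card = c}, c ≤ n := by
    rintro c ⟨I, hI, rfl⟩
    exact card_le_of_indep H g nb hg hnb hgdef G' hchar I hI
  exact le_antisymm (csSup_le ⟨n, hmem⟩ hub) (le_csSup ⟨n, hub⟩ hmem)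

include hn hchar hg hnb hgdef in
lemma excellent : AlphaExcellent G' := by
  intro u
  exact ⟨Iset u, Iset_indep H g nb hg hnb hgdef G' hchar u, Finset.mem_insert_self _ _,
    by rw [Iset_card hn, indepNum_eq hn H g nb hg hnb hgdef G' hchar]⟩

end Excellent

end St13

theorem stmt13 {V : Type} [Fintype V] (G : SimpleGraph V) (hG : IsKTree 2 G) :
    ∃ (m : ℕ) (G' : SimpleGraph (Fin m)) (f : V ↪ Fin m),
      IsKTree 2 G' ∧ AlphaExcellent G' ∧
        ∀ u v : V, G'.Adj (f u) (f v) ↔ G.Adj u v := by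
  obtain ⟨n, H, hH, ⟨e⟩⟩ := hG
  have hn : 2 ≤ n := St13.two_le H hH
  choose nbF hnbF using St13.exists_nbr H hH
  set g : ℕ → ℕ := fun i => i % n with hgdef'
  have hg : ∀ i, g i < n := fun i => Nat.mod_lt _ (by omega)
  set nb : ℕ → ℕ := fun i => (nbF ⟨i % n, Nat.mod_lt _ (by omega)⟩).val with hnbdef
  have hnb : ∀ i, nb i < n := fun i => (nbF _).2
  have hgd : ∀ i, i < n → g i = i := fun i hi => Nat.mod_eq_of_lt hi
  have hadj : ∀ i, H.Adj ⟨g i, hg i⟩ ⟨nb i, hnb i⟩ := fun i => hnbF _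
  set G' := St13.Tg H g nb hg hnb n with hG'
  have hchar : ∀ u v, G'.Adj u v ↔ St13.gA H g nb n u.val v.val :=
    St13.Tg_adj H g nb hg hnb n
  refine ⟨n + 2*n, G', ⟨fun v => ⟨(e v).val, by have := (e v).2; omega⟩, ?_⟩, ?_, ?_, ?_⟩
  · intro a b h
    simp only [Fin.mk.injEq] at h
    exact e.injective (Fin.ext h)
  · exact ⟨n + 2*n, G', St13.Tg_isKTree H g nb hg hnb hadj hH n, ⟨SimpleGraph.Iso.refl⟩⟩
  · exact St13.excellent hn H g nb hg hnb hgd G' hchar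
  · have key : ∀ u v : V, St13.gA H g nb n (e u).val (e v).val ↔ G.Adj u v := by
      intro u v
      constructor
      · rintro (⟨u', v', hu, hv, h⟩ | ⟨i, hi, hB | hB⟩)
        · have h1 : e u = u' := Fin.ext hu
          have h2 : e v = v' := Fin.ext hv
          rw [← h1, ← h2] at h
          exact e.map_rel_iff.mp h
        · exfalso
          rw [St13.gB] at hB
          have := (e u).2
          omega
        · exfalso
          rw [St13.gB] at hB
          have := (e v).2
          omega
      · intro h
        exact Or.inl ⟨e u, e v, rfl, rfl, e.map_rel_iff.mpr h⟩
    intro u v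
    rw [hchar]
    exact key u v
end

section
/- Suppose a graph G contains a triangle abc, vertices d, e, f with edges ad, ae, de, bf, cf, ce (so that ade and bcf are triangles sharing edges with abc appropriately as in configuration H3), where d, e are adjacent only within {a,d,e} plus listed edges and f is adjacent only to b, c. If G − {d,e,f} =: G' then α(G') = α(G) − 1 whenever G is α-excellent. -/
lemma indep_card_le {V : Type} [Fintype V] (G : SimpleGraph V) (I : Finset V)
    (h : IsIndep G ↑I) : I.card ≤ indepNum G :=
  le_csSup ⟨Fintype.card V, fun n hn => by obtain ⟨J, _, rfl⟩ := hn; exact J.card_le_univ⟩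
    ⟨I, h, rfl⟩

lemma exists_max_indep {V : Type} [Fintype V] (G : SimpleGraph V) :
    ∃ I : Finset V, IsIndep G ↑I ∧ I.card = indepNum G := by
  have hne : {n | ∃ I : Finset V, IsIndep G ↑I ∧ I.card = n}.Nonempty :=
    ⟨0, ∅, by simp [IsIndep], by simp⟩
  have hbdd : BddAbove {n | ∃ I : Finset V, IsIndep G ↑I ∧ I.card = n} :=
    ⟨Fintype.card V, fun n hn => by obtain ⟨J, _, rfl⟩ := hn; exact J.card_le_univ⟩
  obtain ⟨I, h, hc⟩ := Nat.sSup_mem hne hbdd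
  exact ⟨I, h, hc⟩

theorem stmt17 {V : Type} [Fintype V] (G : SimpleGraph V) (a b c d e f : V)
    (hnodup : ([a, b, c, d, e, f] : List V).Nodup)
    (hab : G.Adj a b) (hac : G.Adj a c) (hbc : G.Adj b c)
    (hNd : ∀ x : V, G.Adj d x ↔ x = a ∨ x = e)
    (hNe : ∀ x : V, G.Adj e x ↔ x = a ∨ x = d ∨ x = c)
    (hNf : ∀ x : V, G.Adj f x ↔ x = b ∨ x = c)
    (hexc : AlphaExcellent G) :
    indepNum (G.induce {x : V | x ≠ d ∧ x ≠ e ∧ x ≠ f}) = indepNum G - 1 := by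
  classical
  set S : Set V := {x : V | x ≠ d ∧ x ≠ e ∧ x ≠ f} with hS
  haveI : Fintype ↥S := Fintype.ofFinite _
  have hda : G.Adj d a := (hNd a).2 (Or.inl rfl)
  have hea : G.Adj e a := (hNe a).2 (Or.inl rfl)
  -- Upper bound: indepNum (G.induce S) + 1 ≤ indepNum G
  have upper : indepNum (G.induce S) + 1 ≤ indepNum G := by
    obtain ⟨I', hI', hc⟩ := exists_max_indep (G.induce S)
    set I : Finset V := I'.map ⟨Subtype.val, Subtype.val_injective⟩ with hIdef
    have hmemI : ∀ x : V, x ∈ I ↔ ∃ h : x ∈ S, (⟨x, h⟩ : ↥S) ∈ I' := by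
      intro x
      constructor
      · intro hx
        rw [hIdef, Finset.mem_map] at hx
        obtain ⟨y, hy, rfl⟩ := hx
        exact ⟨y.2, hy⟩
      · rintro ⟨h, hx⟩
        rw [hIdef, Finset.mem_map]
        exact ⟨⟨x, h⟩, hx, rfl⟩
    have hIS : ∀ x ∈ I, x ∈ S := fun x hx => ((hmemI x).1 hx).choose
    have hInd : IsIndep G ↑I := by
      intro u hu v hv huv
      simp only [Finset.coe_mem, Finset.mem_coe] at hu hv
      obtain ⟨hu1, hu2⟩ := (hmemI u).1 hu
      obtain ⟨hv1, hv2⟩ := (hmemI v).1 hv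
      have := hI' hu2 hv2 (by simp [Subtype.ext_iff, huv])
      simpa [SimpleGraph.comap_adj] using this
    have hcard : I.card = I'.card := Finset.card_map _
    by_cases ha : a ∈ I
    · -- insert f
      have hfI : f ∉ I := fun h => ((hIS f h).2.2) rfl
      have hb : b ∉ I := fun hb => hInd hb ha (G.ne_of_adj hab).symm hab.symm
      have hc' : c ∉ I := fun hc' => hInd hc' ha (G.ne_of_adj hac).symm hac.symm
      have hins : IsIndep G ↑(insert f I) := by
        intro u hu v hv huv
        simp only [Finset.coe_insert, Set.mem_insert_iff, Finset.mem_coe] at hu hv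
        rcases hu with rfl | hu
        · rcases hv with rfl | hv
          · exact absurd rfl huv
          · intro hadj
            rcases (hNf v).1 hadj with rfl | rfl
            · exact hb hv
            · exact hc' hv
        · rcases hv with rfl | hv
          · intro hadj
            rcases (hNf u).1 (G.adj_symm hadj) with rfl | rfl
            · exact hb hu
            · exact hc' hu
          · exact hInd hu hv huv
      have := indep_card_le G (insert f I) hins
      rw [Finset.card_insert_of_notMem hfI, hcard, hc] at this
      omega
    · -- insert d
      have hdI : d ∉ I := fun h => ((hIS d h).1) rfl
      have hins : IsIndep G ↑(insert d I) := by
        intro u hu v hv huv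
        simp only [Finset.coe_insert, Set.mem_insert_iff, Finset.mem_coe] at hu hv
        rcases hu with rfl | hu
        · rcases hv with rfl | hv
          · exact absurd rfl huv
          · intro hadj
            rcases (hNd v).1 hadj with rfl | rfl
            · exact ha hv
            · exact ((hIS v hv).2.1) rfl
        · rcases hv with rfl | hv
          · intro hadj
            rcases (hNd u).1 (G.adj_symm hadj) with rfl | rfl
            · exact ha hu
            · exact ((hIS u hu).2.1) rfl
          · exact hInd hu hv huv
      have := indep_card_le G (insert d I) hins
      rw [Finset.card_insert_of_notMem hdI, hcard, hc] at this
      omega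
  -- Lower bound: indepNum G - 1 ≤ indepNum (G.induce S)
  have lower : indepNum G - 1 ≤ indepNum (G.induce S) := by
    obtain ⟨I, hI, haI, hcard⟩ := hexc a
    have hd : d ∉ I := fun h => hI h haI (G.ne_of_adj hda) hda
    have he : e ∉ I := fun h => hI h haI (G.ne_of_adj hea) hea
    set I0 : Finset V := I.erase f with hI0
    have hsub : ∀ x ∈ I0, x ∈ S := by
      intro x hx
      have hxI := Finset.mem_of_mem_erase hx
      refine ⟨?_, ?_, Finset.ne_of_mem_erase hx⟩
      · rintro rfl; exact hd hxI
      · rintro rfl; exact he hxI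
    set I' : Finset ↥S :=
      I0.attach.map ⟨fun x => ⟨x.1, hsub x.1 x.2⟩,
        by intro x y h; simp only [Subtype.mk.injEq] at h; exact Subtype.ext h⟩ with hI'def
    have hmem : ∀ y : ↥S, y ∈ I' ↔ (y : V) ∈ I0 := by
      intro y
      rw [hI'def, Finset.mem_map]
      constructor
      · rintro ⟨x, hx, rfl⟩; exact x.2
      · intro hy; exact ⟨⟨y.1, hy⟩, Finset.mem_attach _ _, Subtype.ext rfl⟩
    have hind : IsIndep (G.induce S) ↑I' := by
      intro u hu v hv huv
      simp only [Finset.mem_coe] at hu hv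
      have hu' := (hmem u).1 hu
      have hv' := (hmem v).1 hv
      have hne : (u : V) ≠ (v : V) := fun h => huv (Subtype.ext h)
      have := hI (Finset.mem_of_mem_erase hu') (Finset.mem_of_mem_erase hv') hne
      simpa [SimpleGraph.comap_adj] using this
    have hcard' : I'.card = I0.card := by
      rw [hI'def, Finset.card_map, Finset.card_attach]
    have h1 : I.card - 1 ≤ I0.card := Finset.pred_card_le_card_erase
    have := indep_card_le (G.induce S) I' hind
    omega
  omega
end
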